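/- Let w : L → ℝ, let ℓ* ∈ L be a heavy instance with w(ℓ*) ≥ 0, and let w₁ be the decomposed weight determined by w and ℓ*. Let S ⊆ L be a feasible subset with ℓ* ∉ S such that every ℓ ∈ S with es(ℓ) = es(ℓ*) is heavy and such that S ∪ {ℓ*} violates a resource constraint at es(ℓ*), i.e., ∑_{ℓ ∈ S∪{ℓ*}, es(ℓ)=es(ℓ*)} b̃(ℓ) > 1 or ∑_{ℓ ∈ S∪{ℓ*}, es(ℓ)=es(ℓ*)} c̃(ℓ) > 1. Then w₁(S) ≥ (1/2)·w(ℓ*). -/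
import Mathlib


/-- A subset `S` of the set of assignment instances is feasible if, at every edge
server, the total normalized bandwidth and computation demands are at most `1`,
and each job has at most one instance selected. -/
def Feasible {L J K : Type*} [DecidableEq L] [DecidableEq J] [DecidableEq K]
    (b c : L → ℝ) (job : L → J) (es : L → K) (S : Finset L) : Prop :=
  (∀ k : K, ∑ ℓ ∈ S.filter (fun ℓ => es ℓ = k), b ℓ ≤ 1) ∧
  (∀ k : K, ∑ ℓ ∈ S.filter (fun ℓ => es ℓ = k), c ℓ ≤ 1) ∧
  (∀ j : J, (S.filter (fun ℓ => job ℓ = j)).card ≤ 1)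

/-- An instance is light if both its normalized demands are at most `1/2`. -/
def Light {L : Type*} (b c : L → ℝ) (ℓ : L) : Prop :=
  b ℓ ≤ 1 / 2 ∧ c ℓ ≤ 1 / 2

/-- The decomposed weight `w₁` determined by a weight function `w` and a fixed
instance `ℓstar`. -/
def decompose {L J K : Type*} [DecidableEq J] [DecidableEq K]
    (b c : L → ℝ) (job : L → J) (es : L → K) (w : L → ℝ) (ℓstar : L) (ℓ : L) : ℝ :=
  if job ℓ = job ℓstar then w ℓstar
  else if es ℓ = es ℓstar then w ℓstar * (b ℓ + c ℓ)
  else 0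

/-- If `ℓ*` is heavy with `w(ℓ*) ≥ 0`, `S` is feasible with `ℓ* ∉ S`,
every instance of `S` on the edge server `es(ℓ*)` is heavy, and adding `ℓ*` to `S`
violates a resource constraint at `es(ℓ*)`, then `w₁(S) ≥ (1/2)·w(ℓ*)`. -/
theorem decompose_sum_ge_half_of_heavy
    {L J K : Type*} [Fintype L] [DecidableEq L] [Fintype J] [DecidableEq J]
    [Fintype K] [DecidableEq K]
    (b c : L → ℝ) (job : L → J) (es : L → K)
    (hb : ∀ ℓ : L, 0 < b ℓ ∧ b ℓ ≤ 1) (hc : ∀ ℓ : L, 0 < c ℓ ∧ c ℓ ≤ 1)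
    (w : L → ℝ) (ℓstar : L) (hheavy : ¬ Light b c ℓstar) (hw : 0 ≤ w ℓstar)
    (S : Finset L) (hS : Feasible b c job es S) (hnotmem : ℓstar ∉ S)
    (hSheavy : ∀ ℓ ∈ S, es ℓ = es ℓstar → ¬ Light b c ℓ)
    (hviol :
      1 < ∑ ℓ ∈ (insert ℓstar S).filter (fun ℓ => es ℓ = es ℓstar), b ℓ ∨
      1 < ∑ ℓ ∈ (insert ℓstar S).filter (fun ℓ => es ℓ = es ℓstar), c ℓ) :
    (1 / 2) * w ℓstar ≤ ∑ ℓ ∈ S, decompose b c job es w ℓstar ℓ := by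
  classical
  set T := S.filter (fun ℓ => es ℓ = es ℓstar) with hT
  have hfilter : (insert ℓstar S).filter (fun ℓ => es ℓ = es ℓstar) = insert ℓstar T := by
    rw [Finset.filter_insert]; simp [hT]
  have hTne : T.Nonempty := by
    by_contra h
    rw [Finset.not_nonempty_iff_eq_empty] at h
    rcases hviol with hv | hv <;> rw [hfilter, h] at hv <;> simp at hv
    · exact absurd hv (not_lt.2 (hb ℓstar).2)
    · exact absurd hv (not_lt.2 (hc ℓstar).2)
  have hnn : ∀ ℓ ∈ S, 0 ≤ decompose b c job es w ℓstar ℓ := by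
    intro ℓ _
    unfold decompose
    split_ifs with h1 h2
    · exact hw
    · exact mul_nonneg hw (by linarith [(hb ℓ).1, (hc ℓ).1])
    · exact le_refl 0
  by_cases hjob : ∃ ℓ ∈ S, job ℓ = job ℓstar
  · obtain ⟨ℓ₀, hℓ₀S, hℓ₀j⟩ := hjob
    have hsum := Finset.single_le_sum hnn hℓ₀S
    have hval : decompose b c job es w ℓstar ℓ₀ = w ℓstar := by
      simp [decompose, hℓ₀j]
    linarith
  · push_neg at hjob
    obtain ⟨ℓ₀, hℓ₀T⟩ := hTne
    have hℓ₀S : ℓ₀ ∈ S := (Finset.mem_filter.1 hℓ₀T).1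
    have hes : es ℓ₀ = es ℓstar := (Finset.mem_filter.1 hℓ₀T).2
    have hheavy₀ := hSheavy ℓ₀ hℓ₀S hes
    have hbc : 1 / 2 < b ℓ₀ + c ℓ₀ := by
      unfold Light at hheavy₀; push_neg at hheavy₀
      by_cases hb2 : b ℓ₀ ≤ 1 / 2
      · linarith [hheavy₀ hb2, (hb ℓ₀).1]
      · linarith [(hc ℓ₀).1]
    have hval : decompose b c job es w ℓstar ℓ₀ = w ℓstar * (b ℓ₀ + c ℓ₀) := by
      simp [decompose, hjob ℓ₀ hℓ₀S, hes]
    have hsum := Finset.single_le_sum hnn hℓ₀S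
    nlinarith
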